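/- arXiv:1712.05115 — 4 statements merged into one kernel-verified Lean document; each statement's English description precedes it below -/
import Mathlib

section
/- For every n ≥ 1, if the graph T_{n+1} is SPN, then the complete bipartite graph K_{2,n} is SPN. -/
open Matrix Real

/-- A real matrix `A` is copositive if `xᵀ A x ≥ 0` for every entrywise nonnegative `x`. -/
def IsCopositive {m : Type*} [Fintype m] (A : Matrix m m ℝ) : Prop :=
  ∀ x : m → ℝ, (∀ i, 0 ≤ x i) → 0 ≤ x ⬝ᵥ A.mulVec x

/-- A real matrix is SPN if it is the sum of a positive semidefinite matrix and a
symmetric entrywise nonnegative matrix. -/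
def IsSPN {m : Type*} [Fintype m] (A : Matrix m m ℝ) : Prop :=
  ∃ P N : Matrix m m ℝ, P.PosSemidef ∧ N.IsSymm ∧ (∀ i j, 0 ≤ N i j) ∧ A = P + N

/-- `G` is the graph of the matrix `A`: distinct `i`, `j` are adjacent iff `A i j ≠ 0`. -/
def IsGraphOf {m : Type*} [Fintype m] (A : Matrix m m ℝ) (G : SimpleGraph m) : Prop :=
  ∀ i j, G.Adj i j ↔ i ≠ j ∧ A i j ≠ 0

/-- A simple graph `G` is SPN if every symmetric copositive matrix whose graph is `G` is SPN. -/
def SPNGraph {m : Type*} [Fintype m] (G : SimpleGraph m) : Prop :=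
  ∀ A : Matrix m m ℝ, A.IsSymm → IsCopositive A → IsGraphOf A G → IsSPN A

/-- The graph `T_m` on vertices `{0, …, m-1}`: two distinct vertices are adjacent iff at
least one of them lies in `{m-2, m-1}` (i.e. `m-2` triangles sharing the base `{m-2, m-1}`). -/
def Tgraph (m : ℕ) : SimpleGraph (Fin m) where
  Adj i j := i ≠ j ∧ (m - 2 ≤ i.val ∨ m - 2 ≤ j.val)
  symm := ⟨fun i j h => ⟨h.1.symm, h.2.symm⟩⟩
  loopless := ⟨fun i h => h.1 rfl⟩

/-!
Call the two vertices of the first part of `K_{2,n}` hubs and the other `n` vertices leaves.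

If some leaf `w` has negative entries towards both hubs, then `A w w > 0` and one step of
Gaussian elimination at the pivot `A w w` splits `A` into a positive semidefinite rank-one
matrix and a remainder with zero row and column `w`. The remainder is still copositive: raising
the `w`-coordinate of a nonnegative vector does not change its form, and, the column of `w`
being nonpositive off the pivot, makes the vector orthogonal to that column, where the two forms
agree. On the other vertices the remainder has graph `T_{n+1}`, the two hubs having become
adjacent, so it is SPN by hypothesis.

Otherwise every leaf has at most one negative edge, and subtracting the positive parts of all
hub–leaf entries leaves a positive semidefinite matrix: copositivity at
`e_h + ∑ₖ (A h k)⁻ / A k k • e_k` gives `∑ₖ ((A h k)⁻)² / A k k ≤ A h h`, which is what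
completing the square at every leaf needs.
-/

open Sum

variable {m ι κ : Type*}

namespace Matrix

variable {A : Matrix m m ℝ} {w : m}

/-- Gaussian elimination at the pivot `A w w`: the Schur complement of `A w w`, padded by a
zero row and column at `w`. -/
noncomputable def schurElim (A : Matrix m m ℝ) (w : m) : Matrix m m ℝ :=
  A - (A w w)⁻¹ • vecMulVec (A.col w) (A.row w)

lemma schurElim_apply (i j : m) : A.schurElim w i j = A i j - A i w * A w j / A w w := by
  simp only [schurElim, Matrix.sub_apply, Matrix.smul_apply, vecMulVec_apply, col_apply,
    row_apply, smul_eq_mul]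
  ring

lemma schurElim_row_eq_zero (hw : A w w ≠ 0) (j : m) : A.schurElim w w j = 0 := by
  rw [schurElim_apply, mul_div_cancel_left₀ _ hw, sub_self]

lemma schurElim_col_eq_zero (hw : A w w ≠ 0) (i : m) : A.schurElim w i w = 0 := by
  rw [schurElim_apply, mul_div_cancel_right₀ _ hw, sub_self]

lemma IsSymm.schurElim (hA : A.IsSymm) : (A.schurElim w).IsSymm := by
  ext i j
  simp only [transpose_apply, schurElim_apply, hA.apply]
  ring

variable [Fintype m]

lemma posSemidef_sub_schurElim (hA : A.IsSymm) (hw : 0 ≤ A w w) :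
    (A - A.schurElim w).PosSemidef := by
  have hrow : A.row w = star (A.col w) := by ext i; simp [hA.apply]
  rw [schurElim, sub_sub_cancel, hrow]
  exact (posSemidef_vecMulVec_self_star (A.col w)).smul (inv_nonneg.2 hw)

lemma dotProduct_mulVec_add_single [DecidableEq m] {M : Matrix m m ℝ}
    (hrow : ∀ j, M w j = 0) (hcol : ∀ i, M i w = 0) (x : m → ℝ) (s : ℝ) :
    (x + Pi.single w s) ⬝ᵥ M *ᵥ (x + Pi.single w s) = x ⬝ᵥ M *ᵥ x := by
  have h1 : M *ᵥ Pi.single w s = 0 := by ext i; simp [mulVec_single, hcol]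
  have h2 : (M *ᵥ x) w = 0 := by simp [mulVec, dotProduct, hrow]
  simp [mulVec_add, h1, add_dotProduct, single_dotProduct, h2]

end Matrix

lemma single_apply_nonneg [DecidableEq m] {a : ℝ} (ha : 0 ≤ a) (i k : m) :
    0 ≤ (Pi.single i a : m → ℝ) k :=
  (Pi.single_nonneg (α := fun _ => ℝ)).2 ha k

lemma isSymm_fromBlocks_diagonal [DecidableEq ι] [DecidableEq κ] (a : ι → ℝ) (B : Matrix ι κ ℝ)
    (d : κ → ℝ) : (fromBlocks (diagonal a) B Bᵀ (diagonal d)).IsSymm :=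
  (isSymm_diagonal a).fromBlocks rfl (isSymm_diagonal d)

variable [Fintype m] [Fintype ι] [Fintype κ]

namespace IsCopositive

variable {A : Matrix m m ℝ}

lemma diag_nonneg [DecidableEq m] (hA : IsCopositive A) (i : m) : 0 ≤ A i i := by
  simpa [mulVec_single_one, single_one_dotProduct] using
    hA (Pi.single i 1) (single_apply_nonneg zero_le_one i)

lemma apply_nonneg_of_diag_eq_zero [DecidableEq m] (hA : IsCopositive A) (hsymm : A.IsSymm)
    {i : m} (hi : A i i = 0) (j : m) : 0 ≤ A i j := by
  rcases eq_or_ne i j with rfl | hij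
  · exact hi.ge
  by_contra! hneg
  -- at `t • eᵢ + eⱼ` the form equals `-1`
  set t := (A j j + 1) / (-2 * A i j)
  have ht : 0 ≤ t := div_nonneg (by linarith [hA.diag_nonneg j]) (by linarith)
  have hquad := hA (Pi.single i t + Pi.single j 1) fun k =>
    add_nonneg (single_apply_nonneg ht i k) (single_apply_nonneg zero_le_one j k)
  have htA : t * (-2 * A i j) = A j j + 1 := div_mul_cancel₀ _ (by linarith)
  simp only [mulVec_add, mulVec_single, op_smul_eq_smul, MulOpposite.op_one, one_smul,
    dotProduct_add, dotProduct_smul, add_dotProduct, single_dotProduct, col_apply, hi, mul_zero,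
    hsymm.apply i j, one_mul, zero_add, smul_eq_mul] at hquad
  nlinarith

lemma submatrix (hA : IsCopositive A) {f : ι → m} (hf : Function.Injective f) :
    IsCopositive (A.submatrix f f) := by
  intro x hx
  set z := Function.extend f x 0
  have hz : ∀ i, z (f i) = x i := hf.extend_apply x 0
  have hz0 : ∀ α ∉ Set.range f, z α = 0 := fun α h => by
    simp [z, Function.extend_apply' _ _ _ (by simpa using h)]
  have hz_nonneg : ∀ α, 0 ≤ z α := fun α => by
    by_cases h : α ∈ Set.range f
    · obtain ⟨i, rfl⟩ := h
      exact hz i ▸ hx i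
    · exact (hz0 α h).ge
  convert hA z hz_nonneg using 1
  simp only [dotProduct, mulVec, submatrix_apply]
  refine Fintype.sum_of_injective f hf _ _ (fun α h => by simp [hz0 α h]) fun i => ?_
  rw [hz]
  congr 1
  exact Fintype.sum_of_injective f hf _ _ (fun β h => by simp [hz0 β h]) fun j => by rw [hz]

theorem schurElim [DecidableEq m] {w : m} (hA : IsCopositive A) (hw : 0 < A w w)
    (hcol : ∀ i ≠ w, A i w ≤ 0) : IsCopositive (A.schurElim w) := by
  intro x hx
  set t := -(A.col w ⬝ᵥ x) / A w w
  set y : m → ℝ := x + Pi.single w t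
  have hyw : y w = -(∑ i ∈ {w}ᶜ, A i w * x i) / A w w := by
    have hsplit : A.col w ⬝ᵥ x = A w w * x w + ∑ i ∈ {w}ᶜ, A i w * x i :=
      Fintype.sum_eq_add_sum_compl w _
    simp only [y, t, Pi.add_apply, Pi.single_eq_same, hsplit]
    field_simp
    ring
  have hy : ∀ i, 0 ≤ y i := by
    intro i
    rcases eq_or_ne i w with rfl | hi
    · rw [hyw]
      refine div_nonneg (neg_nonneg.2 <| Finset.sum_nonpos fun j hj => ?_) hw.le
      exact mul_nonpos_of_nonpos_of_nonneg (hcol j (by simpa using hj)) (hx j)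
    · simpa [y, hi] using hx i
  have hcy : A.col w ⬝ᵥ y = 0 := by
    simp only [y, t, dotProduct_add, dotProduct_single, col_apply]
    field_simp
    ring
  have hrank : y ⬝ᵥ vecMulVec (A.col w) (A.row w) *ᵥ y = 0 := by
    simp [vecMulVec_mulVec, dotProduct_comm y, hcy]
  rw [← dotProduct_mulVec_add_single (schurElim_row_eq_zero hw.ne')
    (schurElim_col_eq_zero hw.ne') x t]
  change 0 ≤ y ⬝ᵥ A.schurElim w *ᵥ y
  rw [Matrix.schurElim, sub_mulVec, dotProduct_sub, smul_mulVec, dotProduct_smul, hrank,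
    smul_zero, sub_zero]
  exact hA y hy

end IsCopositive

lemma IsSPN.submatrix {A : Matrix m m ℝ} (hA : IsSPN A) (f : ι → m) :
    IsSPN (A.submatrix f f) := by
  obtain ⟨P, N, hP, hN, hN0, rfl⟩ := hA
  exact ⟨P.submatrix f f, N.submatrix f f, hP.submatrix f, hN.submatrix f, fun _ _ => hN0 _ _,
    rfl⟩

lemma isSPN_submatrix_equiv_iff {A : Matrix m m ℝ} (e : ι ≃ m) :
    IsSPN (A.submatrix e e) ↔ IsSPN A :=
  ⟨fun h => by simpa using h.submatrix e.symm, fun h => h.submatrix e⟩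

lemma IsSPN.add_posSemidef {A B : Matrix m m ℝ} (hA : IsSPN A) (hB : B.PosSemidef) :
    IsSPN (A + B) := by
  obtain ⟨P, N, hP, hN, hN0, rfl⟩ := hA
  exact ⟨P + B, N, hP.add hB, hN, hN0, by abel⟩

lemma IsSPN.fromBlocks_zero {C : Matrix ι ι ℝ} (hC : IsSPN C) :
    IsSPN (fromBlocks C 0 0 (0 : Matrix κ κ ℝ)) := by
  obtain ⟨P, N, hP, hN, hN0, rfl⟩ := hC
  refine ⟨fromBlocks P 0 0 0, fromBlocks N 0 0 0, ?_, hN.fromBlocks (by simp) (by simp),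
    by rintro (i | k) (j | l) <;> simp [hN0], by simp [fromBlocks_add]⟩
  refine PosSemidef.of_dotProduct_mulVec_nonneg (hP.1.fromBlocks (by simp) (by simp)) fun x => ?_
  obtain ⟨y, z, rfl⟩ : ∃ y z, x = Sum.elim y z := ⟨_, _, (Sum.elim_comp_inl_inr x).symm⟩
  simpa [Function.star_sumElim, fromBlocks_mulVec, sumElim_dotProduct_sumElim] using
    hP.dotProduct_mulVec_nonneg y

namespace IsGraphOf

variable {A : Matrix m m ℝ} {G : SimpleGraph m}

lemma apply_ne_zero (hA : IsGraphOf A G) {i j : m} (h : G.Adj i j) : A i j ≠ 0 :=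
  ((hA i j).1 h).2

lemma apply_eq_zero (hA : IsGraphOf A G) {i j : m} (hij : i ≠ j) (h : ¬G.Adj i j) :
    A i j = 0 := by
  by_contra hA0
  exact h ((hA i j).2 ⟨hij, hA0⟩)

lemma submatrix_iso {H : SimpleGraph ι} (hA : IsGraphOf A G) (e : H ≃g G) :
    IsGraphOf (A.submatrix e e) H := by
  intro i j
  rw [← e.map_adj_iff, hA, e.injective.ne_iff, submatrix_apply]

lemma eq_fromBlocks [DecidableEq ι] [DecidableEq κ] {A : Matrix (ι ⊕ κ) (ι ⊕ κ) ℝ}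
    (hsymm : A.IsSymm) (hA : IsGraphOf A (completeBipartiteGraph ι κ)) :
    A = fromBlocks (diagonal fun i => A (inl i) (inl i)) A.toBlocks₁₂ A.toBlocks₁₂ᵀ
      (diagonal fun k => A (inr k) (inr k)) := by
  ext (i | k) (j | l)
  · rcases eq_or_ne i j with rfl | hij
    · simp
    · simpa [hij] using hA.apply_eq_zero (by simpa using hij) (by simp)
  · simp [toBlocks₁₂]
  · simp [toBlocks₁₂, hsymm.apply]
  · rcases eq_or_ne k l with rfl | hkl
    · simp
    · simpa [hkl] using hA.apply_eq_zero (by simpa using hkl) (by simp)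

end IsGraphOf

lemma SPNGraph.map_iso {G : SimpleGraph m} {H : SimpleGraph ι} (e : G ≃g H) (hG : SPNGraph G) :
    SPNGraph H := fun _ hsymm hcop hA =>
  (isSPN_submatrix_equiv_iff e.toEquiv).1 <|
    hG _ (hsymm.submatrix _) (hcop.submatrix e.injective) (hA.submatrix_iso e)

/-- The hubs `ι` form a clique, the leaves `κ` an independent set, and every hub is adjacent to
every leaf. -/
def completeSplitGraph (ι κ : Type*) : SimpleGraph (ι ⊕ κ) :=
  SimpleGraph.fromRel fun a _ => a.isLeft

/-- `T_{m+2}`, with its base `{m, m+1}` as the two hubs. -/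
def completeSplitGraphIsoTgraph (m : ℕ) :
    completeSplitGraph (Fin 2) (Fin m) ≃g Tgraph (m + 2) where
  toEquiv := (Equiv.sumComm _ _).trans finSumFinEquiv
  map_rel_iff' {a b} := by
    rcases a with i | k <;> rcases b with j | l <;>
      simp [completeSplitGraph, Tgraph, Fin.ext_iff] <;> omega

lemma neg_sq_div_le_mul_sq_add {d s : ℝ} (hd : 0 ≤ d) (hs : d = 0 → s = 0) (z : ℝ) :
    -(s ^ 2 / d) ≤ d * z ^ 2 + 2 * z * s := by
  rcases hd.eq_or_lt with rfl | hd
  · simp [hs rfl]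
  · have : d * z ^ 2 + 2 * z * s + s ^ 2 / d = (d * z + s) ^ 2 / d := by field_simp; ring
    linarith [div_nonneg (sq_nonneg (d * z + s)) hd.le]

lemma mul_sq_negPart_div_add {d b : ℝ} :
    d * (b⁻ / d) ^ 2 + 2 * (b⁻ / d) * b = -(b⁻ ^ 2 / d) := by
  rcases eq_or_ne d 0 with rfl | hd
  · simp
  rcases le_total 0 b with hb | hb
  · simp [negPart_eq_zero.2 hb]
  · rw [negPart_eq_neg.2 hb]
    field_simp
    ring

lemma sq_sum_eq_sum_sq {f : ι → ℝ} (hf : ∀ i j, i ≠ j → f i * f j = 0) :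
    (∑ i, f i) ^ 2 = ∑ i, f i ^ 2 := by
  rw [sq, Finset.sum_mul_sum]
  refine Finset.sum_congr rfl fun i _ => ?_
  rw [Finset.sum_eq_single i (fun j _ hji => hf i j hji.symm) (by simp), sq]

section Bipartite

variable [DecidableEq ι] [DecidableEq κ] {a : ι → ℝ} {B : Matrix ι κ ℝ} {d : κ → ℝ}

lemma sumElim_dotProduct_fromBlocks_mulVec (a : ι → ℝ) (B : Matrix ι κ ℝ) (d : κ → ℝ)
    (y : ι → ℝ) (z : κ → ℝ) :
    Sum.elim y z ⬝ᵥ fromBlocks (diagonal a) B Bᵀ (diagonal d) *ᵥ Sum.elim y z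
      = ∑ i, a i * y i ^ 2 + ∑ k, (d k * z k ^ 2 + 2 * z k * (y ᵥ* B) k) := by
  rw [fromBlocks_mulVec, sumElim_dotProduct_sumElim, mulVec_transpose, Sum.elim_comp_inl,
    Sum.elim_comp_inr, dotProduct_add, dotProduct_add, dotProduct_mulVec y B, dotProduct_comm _ z]
  simp only [dotProduct, mulVec_diagonal]
  rw [add_assoc, ← Finset.sum_add_distrib, ← Finset.sum_add_distrib]
  congr 1 <;> exact Finset.sum_congr rfl fun _ _ => by ring

lemma IsCopositive.sum_negPart_sq_div_le
    (hA : IsCopositive (fromBlocks (diagonal a) B Bᵀ (diagonal d))) (i : ι) :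
    ∑ k, (B i k)⁻ ^ 2 / d k ≤ a i := by
  have hd : ∀ k, 0 ≤ d k := fun k => by simpa using hA.diag_nonneg (inr k)
  have := hA (Sum.elim (Pi.single i 1) fun k => (B i k)⁻ / d k) <| by
    rintro (j | k)
    · exact single_apply_nonneg zero_le_one i j
    · exact div_nonneg (negPart_nonneg _) (hd k)
  simpa [sumElim_dotProduct_fromBlocks_mulVec, single_one_vecMul, mul_sq_negPart_div_add,
    Pi.single_apply] using this

theorem IsCopositive.isSPN_fromBlocks
    (hA : IsCopositive (fromBlocks (diagonal a) B Bᵀ (diagonal d)))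
    (hB : ∀ k i j, B i k < 0 → B j k < 0 → i = j) :
    IsSPN (fromBlocks (diagonal a) B Bᵀ (diagonal d)) := by
  have hd : ∀ k, 0 ≤ d k := fun k => by simpa using hA.diag_nonneg (inr k)
  have hd0 : ∀ k i, d k = 0 → (B i k)⁻ = 0 := fun k i hk =>
    negPart_eq_zero.2 <| by
      simpa using hA.apply_nonneg_of_diag_eq_zero (isSymm_fromBlocks_diagonal a B d)
        (i := inr k) (by simpa) (inl i)
  set Bneg := B.map (·⁻)
  set Bpos := B.map (·⁺)
  refine ⟨fromBlocks (diagonal a) (-Bneg) (-Bneg)ᵀ (diagonal d), fromBlocks 0 Bpos Bposᵀ 0,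
    ?_, IsSymm.fromBlocks (by simp) rfl (by simp), ?_, ?_⟩
  · refine PosSemidef.of_dotProduct_mulVec_nonneg
      (isHermitian_iff_isSymm.2 (isSymm_fromBlocks_diagonal a _ d)) fun x => ?_
    obtain ⟨y, z, rfl⟩ : ∃ y z, x = Sum.elim y z := ⟨_, _, (Sum.elim_comp_inl_inr x).symm⟩
    rw [star_trivial, sumElim_dotProduct_fromBlocks_mulVec]
    set s := y ᵥ* -Bneg
    have hs : ∀ k, s k = -∑ i, (B i k)⁻ * y i := fun k => by
      simp [s, Bneg, vecMul, dotProduct, mul_comm]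
    have hs_sq : ∀ k, s k ^ 2 = ∑ i, (B i k)⁻ ^ 2 * y i ^ 2 := fun k => by
      rw [hs, neg_sq, sq_sum_eq_sum_sq]
      · simp only [mul_pow]
      have hneg : ∀ i, (B i k)⁻ * y i ≠ 0 → B i k < 0 := fun i h =>
        negPart_pos_iff.1 ((negPart_nonneg _).lt_of_ne' (left_ne_zero_of_mul h))
      intro i j hij
      by_contra hne
      obtain ⟨hi, hj⟩ := mul_ne_zero_iff.1 hne
      exact hij (hB k i j (hneg i hi) (hneg j hj))
    have hs0 : ∀ k, d k = 0 → s k = 0 := fun k hk => by simp [hs, hd0 k _ hk]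
    calc 0 ≤ ∑ i, (a i - ∑ k, (B i k)⁻ ^ 2 / d k) * y i ^ 2 :=
          Finset.sum_nonneg fun i _ =>
            mul_nonneg (sub_nonneg.2 (hA.sum_negPart_sq_div_le i)) (sq_nonneg _)
      _ = ∑ i, a i * y i ^ 2 + ∑ k, -(s k ^ 2 / d k) := by
          simp only [hs_sq, sub_mul, Finset.sum_sub_distrib, Finset.sum_mul, Finset.sum_div,
            Finset.sum_neg_distrib, ← sub_eq_add_neg]
          rw [Finset.sum_comm]
          congr 1
          exact Finset.sum_congr rfl fun _ _ => Finset.sum_congr rfl fun _ _ => by ring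
      _ ≤ _ := by
          gcongr with k
          exact neg_sq_div_le_mul_sq_add (hd k) (hs0 k) (z k)
  · rintro (i | k) (j | l) <;> simp [Bpos, posPart_nonneg]
  · have hsplit : -Bneg + Bpos = B := by
      ext i k
      simp [Bneg, Bpos, neg_add_eq_sub, posPart_sub_negPart]
    rw [fromBlocks_add, ← transpose_add, hsplit, add_zero, add_zero]

end Bipartite

section LeafElimination

variable {n : ℕ}

lemma isSPN_of_isSPN_submatrix_succAbove {M : Matrix (ι ⊕ Fin (n + 1)) (ι ⊕ Fin (n + 1)) ℝ}
    {w : Fin (n + 1)} (hrow : ∀ β, M (inr w) β = 0) (hcol : ∀ α, M α (inr w) = 0)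
    (h : IsSPN (M.submatrix (Sum.map id w.succAbove) (Sum.map id w.succAbove))) : IsSPN M := by
  -- `(ι ⊕ Fin n) ⊕ Unit ≃ ι ⊕ Fin (n + 1)`, sending the `Unit` vertex to the leaf `w`
  rw [← isSPN_submatrix_equiv_iff <| (Equiv.sumAssoc ι (Fin n) Unit).trans <|
    (Equiv.refl ι).sumCongr <| (Equiv.optionEquivSumPUnit _).symm.trans (finSuccEquiv' w).symm]
  convert h.fromBlocks_zero (κ := Unit) using 1
  ext ((i | k) | u) ((j | l) | v) <;> simp [hrow, hcol]

lemma isGraphOf_schurElim_submatrix {A : Matrix (ι ⊕ Fin (n + 1)) (ι ⊕ Fin (n + 1)) ℝ}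
    (hA : IsGraphOf A (completeBipartiteGraph ι (Fin (n + 1))))
    {w : Fin (n + 1)} (hw : A (inr w) (inr w) ≠ 0) :
    IsGraphOf ((A.schurElim (inr w)).submatrix (Sum.map id w.succAbove) (Sum.map id w.succAbove))
      (completeSplitGraph ι (Fin n)) := by
  have hhub : ∀ i j, i ≠ j → A (inl i) (inl j) = 0 := fun i j h =>
    hA.apply_eq_zero (by simpa) (by simp)
  have hleaf : ∀ k l, k ≠ l → A (inr k) (inr l) = 0 := fun k l h =>
    hA.apply_eq_zero (by simpa) (by simp)
  have hedge : ∀ i k, A (inl i) (inr k) ≠ 0 := fun i k => hA.apply_ne_zero (by simp)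
  have hedge' : ∀ i k, A (inr k) (inl i) ≠ 0 := fun i k => hA.apply_ne_zero (by simp)
  have hw₁ : ∀ k, A (inr (w.succAbove k)) (inr w) = 0 := fun k => hleaf _ _ (w.succAbove_ne k)
  have hw₂ : ∀ k, A (inr w) (inr (w.succAbove k)) = 0 := fun k =>
    hleaf _ _ (w.succAbove_ne k).symm
  rintro (i | k) (j | l)
  · rcases eq_or_ne i j with rfl | hij
    · simp [completeSplitGraph]
    · simp [completeSplitGraph, schurElim_apply, hij, hhub i j hij, hedge, hedge', hw]
  · simp [completeSplitGraph, schurElim_apply, hw₂, hedge]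
  · simp [completeSplitGraph, schurElim_apply, hw₁, hedge']
  · rcases eq_or_ne k l with rfl | hkl
    · simp [completeSplitGraph]
    · simp [completeSplitGraph, schurElim_apply, hkl, hw₁,
        hleaf _ _ (w.succAbove_right_injective.ne hkl)]

theorem isSPN_of_forall_hub_neg [DecidableEq ι] [Nonempty ι]
    (hT : SPNGraph (completeSplitGraph ι (Fin n)))
    {A : Matrix (ι ⊕ Fin (n + 1)) (ι ⊕ Fin (n + 1)) ℝ} (hsymm : A.IsSymm) (hcop : IsCopositive A)
    (hA : IsGraphOf A (completeBipartiteGraph ι (Fin (n + 1)))) {w : Fin (n + 1)}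
    (hneg : ∀ i, A (inl i) (inr w) < 0) : IsSPN A := by
  obtain ⟨i₀⟩ := ‹Nonempty ι›
  have hw : 0 < A (inr w) (inr w) := (hcop.diag_nonneg _).lt_of_ne fun h =>
    (hneg i₀).not_ge <| by
      simpa [hsymm.apply] using hcop.apply_nonneg_of_diag_eq_zero hsymm h.symm (inl i₀)
  have hcol : ∀ α ≠ inr w, A α (inr w) ≤ 0 := by
    rintro (i | k) hk
    · exact (hneg i).le
    · exact (hA.apply_eq_zero (by simpa using hk) (by simp)).le
  have hA' : IsSPN (A.schurElim (inr w)) := by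
    refine isSPN_of_isSPN_submatrix_succAbove (schurElim_row_eq_zero hw.ne')
      (schurElim_col_eq_zero hw.ne') (hT _ (hsymm.schurElim.submatrix _) ?_
        (isGraphOf_schurElim_submatrix hA hw.ne'))
    exact (hcop.schurElim hw hcol).submatrix <|
      Sum.map_injective.2 ⟨Function.injective_id, Fin.succAbove_right_injective⟩
  simpa using hA'.add_posSemidef (posSemidef_sub_schurElim hsymm hw.le)

end LeafElimination

theorem K2n_SPN_of_T_SPN_general (n : ℕ) (hT : SPNGraph (Tgraph (n + 1))) :
    SPNGraph (completeBipartiteGraph (Fin 2) (Fin n)) := by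
  intro A hsymm hcop hA
  by_cases hneg : ∃ w, ∀ i, A (inl i) (inr w) < 0
  · obtain ⟨w, hw⟩ := hneg
    obtain ⟨m, rfl⟩ := Nat.exists_eq_add_one_of_ne_zero w.pos.ne'
    exact isSPN_of_forall_hub_neg (hT.map_iso (completeSplitGraphIsoTgraph m).symm) hsymm hcop
      hA hw
  · rw [hA.eq_fromBlocks hsymm] at hcop ⊢
    refine hcop.isSPN_fromBlocks fun k i j hi hj => by_contra fun hij => hneg ⟨k, fun l => ?_⟩
    obtain rfl | rfl : l = i ∨ l = j := by omega
    exacts [hi, hj]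

/-- If the graph `T_{n+1}` is SPN, then the complete bipartite graph `K_{2,n}` is SPN. -/
theorem K2n_SPN_of_T_SPN (n : ℕ) (hn : 1 ≤ n) (hT : SPNGraph (Tgraph (n + 1))) :
    SPNGraph (completeBipartiteGraph (Fin 2) (Fin n)) :=
  K2n_SPN_of_T_SPN_general n hT
end

section
/- Let θ = (θ_1,…,θ_5) ∈ ℝ⁵ with θ_i ≥ 0 for all i and θ_1 + θ_2 + θ_3 + θ_4 + θ_5 = π. Then S(θ) = uuᵀ + vvᵀ, where u = (1, −cos θ_1, cos(θ_1+θ_2), cos(θ_4+θ_5), −cos θ_5)ᵀ and v = (0, sin θ_1, −sin(θ_1+θ_2), sin(θ_4+θ_5), −sin θ_5)ᵀ. -/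
open Real

/-- The matrix `S(θ)` (θ 0-indexed: `θ 0, …, θ 4` are `θ_1, …, θ_5`): unit diagonal and,
cyclically, `S(θ)_{i,i+1} = -cos θ_i`, `S(θ)_{i,i+2} = cos (θ_i + θ_{i+1})`. -/
noncomputable def Smat (θ : Fin 5 → ℝ) : Matrix (Fin 5) (Fin 5) ℝ :=
  !![1,                    -cos (θ 0),           cos (θ 0 + θ 1),      cos (θ 3 + θ 4),      -cos (θ 4);
     -cos (θ 0),           1,                    -cos (θ 1),           cos (θ 1 + θ 2),      cos (θ 4 + θ 0);
     cos (θ 0 + θ 1),      -cos (θ 1),           1,                    -cos (θ 2),           cos (θ 2 + θ 3);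
     cos (θ 3 + θ 4),      cos (θ 1 + θ 2),      -cos (θ 2),           1,                    -cos (θ 3);
     -cos (θ 4),           cos (θ 4 + θ 0),      cos (θ 2 + θ 3),      -cos (θ 3),           1]

set_option maxHeartbeats 2000000 in
/-- If `θ ≥ 0` entrywise and `θ_1 + ⋯ + θ_5 = π`, then `S(θ) = uuᵀ + vvᵀ` for the stated
vectors `u` and `v`. -/
theorem Smat_eq_rank_two_decomp (θ : Fin 5 → ℝ) (hθ : ∀ i, 0 ≤ θ i)
    (hsum : θ 0 + θ 1 + θ 2 + θ 3 + θ 4 = π) :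
    Smat θ =
      Matrix.vecMulVec ![1, -cos (θ 0), cos (θ 0 + θ 1), cos (θ 3 + θ 4), -cos (θ 4)]
                       ![1, -cos (θ 0), cos (θ 0 + θ 1), cos (θ 3 + θ 4), -cos (θ 4)] +
      Matrix.vecMulVec ![0, sin (θ 0), -sin (θ 0 + θ 1), sin (θ 3 + θ 4), -sin (θ 4)]
                       ![0, sin (θ 0), -sin (θ 0 + θ 1), sin (θ 3 + θ 4), -sin (θ 4)] := by
  have h4 : θ 4 = π - (θ 0 + θ 1 + θ 2 + θ 3) := by linarith
  ext i j
  fin_cases i <;> fin_cases j <;>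
    simp [Smat, Matrix.vecMulVec, h4, cos_pi_sub, sin_pi_sub, cos_add, sin_add, cos_sub,
      sin_sub, sub_eq_iff_eq_add] <;>
    (try ring_nf) <;> (try simp only [sin_sq]) <;> (try ring) <;>
    (try linear_combination (cos (θ 3) ^ 2 - sin (θ 3) ^ 2 - 1) * sin_sq_add_cos_sq (θ 3))
end

section
/- Let θ = (θ_1,…,θ_5) ∈ ℝ⁵ with θ_i ≥ 0 for all i and θ_1 + θ_2 + θ_3 + θ_4 + θ_5 < π. If the number of pairs (i,j) with 1 ≤ i < j ≤ 5 and S(θ)_{ij} > 0 is at most three, then θ_i ≤ π/2 for every i ∈ {1,…,5}. -/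
open Real

lemma four_le_ncard {S : Set (Fin 5 × Fin 5)} (F : Finset (Fin 5 × Fin 5))
    (hF : 4 ≤ F.card) (hsub : ∀ p ∈ F, p ∈ S) : 4 ≤ S.ncard := by
  calc 4 ≤ F.card := hF
    _ = (↑F : Set (Fin 5 × Fin 5)).ncard := (Set.ncard_coe_finset F).symm
    _ ≤ S.ncard := Set.ncard_le_ncard hsub (Set.toFinite S)

lemma cos_sum_pos {a b : ℝ} (ha : 0 ≤ a) (hb : 0 ≤ b) (h : a + b < π / 2) :
    0 < Real.cos (a + b) :=
  Real.cos_pos_of_mem_Ioo ⟨by linarith [Real.pi_pos], h⟩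

/-- If `θ ≥ 0` entrywise, `θ_1 + ⋯ + θ_5 < π`, and `S(θ)` has at most three positive
entries above the diagonal, then every `θ_i ≤ π/2`. -/
theorem theta_le_pi_div_two_of_few_positive (θ : Fin 5 → ℝ) (hθ : ∀ i, 0 ≤ θ i)
    (hsum : θ 0 + θ 1 + θ 2 + θ 3 + θ 4 < π)
    (hpos : {p : Fin 5 × Fin 5 | p.1 < p.2 ∧ 0 < Smat θ p.1 p.2}.ncard ≤ 3) :
    ∀ i, θ i ≤ π / 2 := by
  by_contra hcon
  push_neg at hcon
  obtain ⟨k, hk⟩ := hcon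
  have hπ := Real.pi_pos
  have h0 := hθ 0
  have h1 := hθ 1
  have h2 := hθ 2
  have h3 := hθ 3
  have h4 := hθ 4
  set S : Set (Fin 5 × Fin 5) := {p : Fin 5 × Fin 5 | p.1 < p.2 ∧ 0 < Smat θ p.1 p.2} with hS
  fin_cases k
  · replace hk : π / 2 < θ 0 := hk
    have hneg : Real.cos (θ 0) < 0 :=
      Real.cos_neg_of_pi_div_two_lt_of_lt hk (by linarith)
    have e1 : ((0 : Fin 5), (1 : Fin 5)) ∈ S := ⟨by decide, by simp [Smat]; linarith⟩
    have e2 : ((1 : Fin 5), (3 : Fin 5)) ∈ S :=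
      ⟨by decide, by simp [Smat]; exact cos_sum_pos h1 h2 (by linarith)⟩
    have e3 : ((2 : Fin 5), (4 : Fin 5)) ∈ S :=
      ⟨by decide, by simp [Smat]; exact cos_sum_pos h2 h3 (by linarith)⟩
    have e4 : ((0 : Fin 5), (3 : Fin 5)) ∈ S :=
      ⟨by decide, by simp [Smat]; exact cos_sum_pos h3 h4 (by linarith)⟩
    have := four_le_ncard {((0:Fin 5),(1:Fin 5)), ((1:Fin 5),(3:Fin 5)), ((2:Fin 5),(4:Fin 5)), ((0:Fin 5),(3:Fin 5))}
      (by decide) (by intro p hp; fin_cases hp <;> assumption)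
    omega
  · replace hk : π / 2 < θ 1 := hk
    have hneg : Real.cos (θ 1) < 0 :=
      Real.cos_neg_of_pi_div_two_lt_of_lt hk (by linarith)
    have e1 : ((1 : Fin 5), (2 : Fin 5)) ∈ S := ⟨by decide, by simp [Smat]; linarith⟩
    have e2 : ((2 : Fin 5), (4 : Fin 5)) ∈ S :=
      ⟨by decide, by simp [Smat]; exact cos_sum_pos h2 h3 (by linarith)⟩
    have e3 : ((0 : Fin 5), (3 : Fin 5)) ∈ S :=
      ⟨by decide, by simp [Smat]; exact cos_sum_pos h3 h4 (by linarith)⟩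
    have e4 : ((1 : Fin 5), (4 : Fin 5)) ∈ S :=
      ⟨by decide, by simp [Smat]; exact cos_sum_pos h4 h0 (by linarith)⟩
    have := four_le_ncard {((1:Fin 5),(2:Fin 5)), ((2:Fin 5),(4:Fin 5)), ((0:Fin 5),(3:Fin 5)), ((1:Fin 5),(4:Fin 5))}
      (by decide) (by intro p hp; fin_cases hp <;> assumption)
    omega
  · replace hk : π / 2 < θ 2 := hk
    have hneg : Real.cos (θ 2) < 0 :=
      Real.cos_neg_of_pi_div_two_lt_of_lt hk (by linarith)
    have e1 : ((2 : Fin 5), (3 : Fin 5)) ∈ S := ⟨by decide, by simp [Smat]; linarith⟩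
    have e2 : ((0 : Fin 5), (3 : Fin 5)) ∈ S :=
      ⟨by decide, by simp [Smat]; exact cos_sum_pos h3 h4 (by linarith)⟩
    have e3 : ((1 : Fin 5), (4 : Fin 5)) ∈ S :=
      ⟨by decide, by simp [Smat]; exact cos_sum_pos h4 h0 (by linarith)⟩
    have e4 : ((0 : Fin 5), (2 : Fin 5)) ∈ S :=
      ⟨by decide, by simp [Smat]; exact cos_sum_pos h0 h1 (by linarith)⟩
    have := four_le_ncard {((2:Fin 5),(3:Fin 5)), ((0:Fin 5),(3:Fin 5)), ((1:Fin 5),(4:Fin 5)), ((0:Fin 5),(2:Fin 5))}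
      (by decide) (by intro p hp; fin_cases hp <;> assumption)
    omega
  · replace hk : π / 2 < θ 3 := hk
    have hneg : Real.cos (θ 3) < 0 :=
      Real.cos_neg_of_pi_div_two_lt_of_lt hk (by linarith)
    have e1 : ((3 : Fin 5), (4 : Fin 5)) ∈ S := ⟨by decide, by simp [Smat]; linarith⟩
    have e2 : ((1 : Fin 5), (4 : Fin 5)) ∈ S :=
      ⟨by decide, by simp [Smat]; exact cos_sum_pos h4 h0 (by linarith)⟩
    have e3 : ((0 : Fin 5), (2 : Fin 5)) ∈ S :=
      ⟨by decide, by simp [Smat]; exact cos_sum_pos h0 h1 (by linarith)⟩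
    have e4 : ((1 : Fin 5), (3 : Fin 5)) ∈ S :=
      ⟨by decide, by simp [Smat]; exact cos_sum_pos h1 h2 (by linarith)⟩
    have := four_le_ncard {((3:Fin 5),(4:Fin 5)), ((1:Fin 5),(4:Fin 5)), ((0:Fin 5),(2:Fin 5)), ((1:Fin 5),(3:Fin 5))}
      (by decide) (by intro p hp; fin_cases hp <;> assumption)
    omega
  · replace hk : π / 2 < θ 4 := hk
    have hneg : Real.cos (θ 4) < 0 :=
      Real.cos_neg_of_pi_div_two_lt_of_lt hk (by linarith)
    have e1 : ((0 : Fin 5), (4 : Fin 5)) ∈ S := ⟨by decide, by simp [Smat]; linarith⟩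
    have e2 : ((0 : Fin 5), (2 : Fin 5)) ∈ S :=
      ⟨by decide, by simp [Smat]; exact cos_sum_pos h0 h1 (by linarith)⟩
    have e3 : ((1 : Fin 5), (3 : Fin 5)) ∈ S :=
      ⟨by decide, by simp [Smat]; exact cos_sum_pos h1 h2 (by linarith)⟩
    have e4 : ((2 : Fin 5), (4 : Fin 5)) ∈ S :=
      ⟨by decide, by simp [Smat]; exact cos_sum_pos h2 h3 (by linarith)⟩
    have := four_le_ncard {((0:Fin 5),(4:Fin 5)), ((0:Fin 5),(2:Fin 5)), ((1:Fin 5),(3:Fin 5)), ((2:Fin 5),(4:Fin 5))}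
      (by decide) (by intro p hp; fin_cases hp <;> assumption)
    omega
end

section
/- Let θ = (θ_1,…,θ_5) ∈ ℝ⁵ with θ_i ≥ 0 for all i and θ_1 + θ_2 + θ_3 + θ_4 + θ_5 < π, and let ℓ ∈ {1,…,5} be an index with Σ_{i≠ℓ} θ_i ≥ π/2. Define θ' ∈ ℝ⁵ by θ'_i = θ_i for i ≠ ℓ and θ'_ℓ = π − Σ_{i≠ℓ} θ_i. Then: (i) θ_ℓ < θ'_ℓ ≤ π/2; (ii) θ'_1 + ⋯ + θ'_5 = π; (iii) S(θ')_{i,i+2} ≤ S(θ)_{i,i+2} for every i (indices cyclic modulo 5); (iv) S(θ')_{i,i+1} = S(θ)_{i,i+1} for every i ≠ ℓ; and (v) S(θ')_{ℓ,ℓ+1} ≤ 0. -/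
open Real

/-!
Raising `θ_ℓ` to `θ'_ℓ` only increases the angles and brings their total to `π`, so each
`θ'_i + θ'_{i+1}` stays in `[0, π]`, where `cos` is decreasing; and `θ'_ℓ ∈ [0, π/2]` makes
`cos θ'_ℓ ≥ 0`.
-/

open Finset Function

lemma Smat_apply_add_one (θ : Fin 5 → ℝ) (i : Fin 5) : Smat θ i (i + 1) = -cos (θ i) := by
  fin_cases i <;> simp [Smat]

lemma Smat_apply_add_two (θ : Fin 5 → ℝ) (i : Fin 5) :
    Smat θ i (i + 2) = cos (θ i + θ (i + 1)) := by
  fin_cases i <;> simp [Smat]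

lemma Finset.sum_update_sub_sum_erase {ι M : Type*} [Fintype ι] [DecidableEq ι] [AddCommGroup M]
    (f : ι → M) (i : ι) (c : M) : ∑ j, update f i (c - ∑ j ∈ univ.erase i, f j) j = c := by
  rw [sum_update_of_mem (mem_univ i), sdiff_singleton_eq_erase, sub_add_cancel]

/-- Given `θ ≥ 0` with `θ_1 + ⋯ + θ_5 < π` and an index `ℓ` with `Σ_{i ≠ ℓ} θ_i ≥ π/2`,
let `θ'` agree with `θ` off `ℓ` and have `θ'_ℓ = π − Σ_{i ≠ ℓ} θ_i`. Then
(i) `θ_ℓ < θ'_ℓ ≤ π/2`; (ii) `Σ θ' = π`; (iii) `S(θ')_{i,i+2} ≤ S(θ)_{i,i+2}` for all `i`;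
(iv) `S(θ')_{i,i+1} = S(θ)_{i,i+1}` for `i ≠ ℓ`; (v) `S(θ')_{ℓ,ℓ+1} ≤ 0`
(indices cyclic in `Fin 5`). -/
theorem Smat_update_theta (θ : Fin 5 → ℝ) (hθ : ∀ i, 0 ≤ θ i)
    (hsum : θ 0 + θ 1 + θ 2 + θ 3 + θ 4 < π) (ℓ : Fin 5)
    (hℓ : π / 2 ≤ ∑ i ∈ Finset.univ.erase ℓ, θ i)
    (θ' : Fin 5 → ℝ)
    (hθ' : θ' = Function.update θ ℓ (π - ∑ i ∈ Finset.univ.erase ℓ, θ i)) :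
    (θ ℓ < θ' ℓ) ∧ (θ' ℓ ≤ π / 2) ∧
    (∑ i, θ' i = π) ∧
    (∀ i : Fin 5, Smat θ' i (i + 2) ≤ Smat θ i (i + 2)) ∧
    (∀ i : Fin 5, i ≠ ℓ → Smat θ' i (i + 1) = Smat θ i (i + 1)) ∧
    (Smat θ' ℓ (ℓ + 1) ≤ 0) := by
  have hθ'ℓ : θ' ℓ = π - (∑ i, θ i - θ ℓ) := by
    rw [hθ', update_self, sum_erase_eq_sub (mem_univ ℓ)]
  have hlt : θ ℓ < θ' ℓ := by rw [hθ'ℓ, Fin.sum_univ_five]; linarith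
  have hle : θ' ℓ ≤ π / 2 := by rw [hθ'ℓ, ← sum_erase_eq_sub (mem_univ ℓ)]; linarith
  have htot : ∑ i, θ' i = π := hθ' ▸ sum_update_sub_sum_erase θ ℓ π
  have hmono : θ ≤ θ' := by
    rw [hθ'] at hlt ⊢
    exact le_update_iff.2 ⟨by simpa using hlt.le, fun _ _ ↦ le_rfl⟩
  have hpair (i : Fin 5) : θ' i + θ' (i + 1) ≤ π :=
    htot ▸ add_le_sum (fun j _ ↦ (hθ j).trans (hmono j)) (mem_univ _) (mem_univ _)
      (by fin_cases i <;> decide)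
  refine ⟨hlt, hle, htot, fun i ↦ ?_, fun i hi ↦ ?_, ?_⟩
  · rw [Smat_apply_add_two, Smat_apply_add_two]
    exact cos_le_cos_of_nonneg_of_le_pi (add_nonneg (hθ _) (hθ _)) (hpair i)
      (add_le_add (hmono _) (hmono _))
  · rw [Smat_apply_add_one, Smat_apply_add_one, hθ', update_of_ne hi]
  · rw [Smat_apply_add_one, neg_nonpos]
    exact cos_nonneg_of_mem_Icc ⟨by linarith [hθ ℓ, pi_pos], hle⟩
end
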